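/- arXiv:1501.02168 — 3 statements merged into one kernel-verified Lean document; each statement's English description precedes it below -/
import Mathlib

section
/- For a polynomial p of degree n with all roots real, and any real z that is not a root, the quantity (n−1)²p'(z)² − n(n−1)p(z)p''(z) is nonnegative; hence the square root in Laguerre's formula is real. -/
/-!
Writing `p = c ∏ⱼ (z - ρⱼ)`, `S₁ = ∑ⱼ (z - ρⱼ)⁻¹` and `S₂ = ∑ⱼ (z - ρⱼ)⁻²`, one has `p' = p S₁` and
`p'' = p (S₁² - S₂)` off the roots, so the radicand equals `p² (n - 1) (n S₂ - S₁²)`, which is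
nonnegative by Cauchy–Schwarz.
-/

open Finset

section ProdSub

variable {ι : Type*} [DecidableEq ι] (s : Finset ι) (ρ : ι → ℝ)

theorem hasDerivAt_prod_sub (x : ℝ) :
    HasDerivAt (fun y => ∏ j ∈ s, (y - ρ j)) (∑ j ∈ s, ∏ i ∈ s.erase j, (x - ρ i)) x := by
  simpa using HasDerivAt.fun_finsetProd (u := s) fun i _ => (hasDerivAt_id x).sub_const (ρ i)

theorem deriv_prod_sub :
    deriv (fun y => ∏ j ∈ s, (y - ρ j)) = fun x => ∑ j ∈ s, ∏ i ∈ s.erase j, (x - ρ i) :=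
  funext fun x => (hasDerivAt_prod_sub s ρ x).deriv

variable {s ρ} {x : ℝ}

theorem prod_erase_sub_eq_mul_inv (hx : ∀ j ∈ s, x ≠ ρ j) {j : ι} (hj : j ∈ s) :
    ∏ i ∈ s.erase j, (x - ρ i) = (∏ i ∈ s, (x - ρ i)) * (x - ρ j)⁻¹ := by
  rw [← mul_prod_erase s _ hj, mul_comm (x - ρ j),
    mul_inv_cancel_right₀ (sub_ne_zero.2 (hx j hj))]

theorem sum_prod_erase_sub_eq_mul_sum_inv (hx : ∀ j ∈ s, x ≠ ρ j) :
    ∑ j ∈ s, ∏ i ∈ s.erase j, (x - ρ i) = (∏ i ∈ s, (x - ρ i)) * ∑ j ∈ s, (x - ρ j)⁻¹ := by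
  rw [mul_sum]
  exact sum_congr rfl fun j hj => prod_erase_sub_eq_mul_inv hx hj

theorem deriv_prod_sub_eq_mul_sum_inv (hx : ∀ j ∈ s, x ≠ ρ j) :
    deriv (fun y => ∏ j ∈ s, (y - ρ j)) x = (∏ j ∈ s, (x - ρ j)) * ∑ j ∈ s, (x - ρ j)⁻¹ := by
  rw [(hasDerivAt_prod_sub s ρ x).deriv, sum_prod_erase_sub_eq_mul_sum_inv hx]

theorem deriv_deriv_prod_sub_eq_mul (hx : ∀ j ∈ s, x ≠ ρ j) :
    deriv (deriv fun y => ∏ j ∈ s, (y - ρ j)) x =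
      (∏ j ∈ s, (x - ρ j)) * ((∑ j ∈ s, (x - ρ j)⁻¹) ^ 2 - ∑ j ∈ s, ((x - ρ j)⁻¹) ^ 2) := by
  have hderiv : HasDerivAt (fun y => ∑ j ∈ s, ∏ i ∈ s.erase j, (y - ρ i))
      (∑ j ∈ s, ∑ i ∈ s.erase j, ∏ k ∈ (s.erase j).erase i, (x - ρ k)) x :=
    HasDerivAt.fun_sum fun j _ => hasDerivAt_prod_sub (s.erase j) ρ x
  set P := ∏ j ∈ s, (x - ρ j)
  set w := fun j => (x - ρ j)⁻¹
  rw [deriv_prod_sub, hderiv.deriv]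
  calc _ = ∑ j ∈ s, P * w j * (∑ i ∈ s, w i - w j) := sum_congr rfl fun j hj => by
          rw [sum_prod_erase_sub_eq_mul_sum_inv fun i hi => hx i (mem_of_mem_erase hi),
            prod_erase_sub_eq_mul_inv hx hj, sum_erase_eq_sub hj]
    _ = P * ((∑ i ∈ s, w i) ^ 2 - ∑ i ∈ s, w i ^ 2) := by
      simp only [mul_sub, sum_sub_distrib, ← mul_sum, ← sum_mul, sq, mul_assoc]

end ProdSub

theorem sub_one_mul_card_mul_sum_sq_sub_sq_sum_nonneg {ι : Type*} (s : Finset ι) (w : ι → ℝ) :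
    0 ≤ ((#s : ℝ) - 1) * (#s * ∑ i ∈ s, w i ^ 2 - (∑ i ∈ s, w i) ^ 2) := by
  rcases s.eq_empty_or_nonempty with rfl | hs
  · simp
  · exact mul_nonneg (sub_nonneg.2 (by exact_mod_cast hs.card_pos))
      (sub_nonneg.2 sq_sum_le_card_mul_sum_sq)

theorem laguerre_radicand_nonneg_real_roots_general (n : ℕ)
    (c : ℝ) (ρ : Fin n → ℝ)
    (p : ℝ → ℝ) (hp : ∀ z, p z = c * ∏ j, (z - ρ j))
    (z : ℝ) (hz : p z ≠ 0) :
    0 ≤ ((n : ℝ) - 1) ^ 2 * (deriv p z) ^ 2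
        - (n : ℝ) * ((n : ℝ) - 1) * p z * deriv (deriv p) z := by
  have hroots : ∀ j ∈ univ, z ≠ ρ j := fun j _ h =>
    hz (by rw [hp, prod_eq_zero (mem_univ j) (sub_eq_zero.2 h), mul_zero])
  obtain rfl : p = fun y => c * ∏ j, (y - ρ j) := funext hp
  simp only [deriv_const_mul_field', deriv_prod_sub_eq_mul_sum_inv hroots,
    deriv_deriv_prod_sub_eq_mul hroots]
  have hCS := sub_one_mul_card_mul_sum_sq_sub_sq_sum_nonneg univ fun j => (z - ρ j)⁻¹
  rw [card_univ, Fintype.card_fin] at hCS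
  calc (0 : ℝ) ≤ (c * ∏ j, (z - ρ j)) ^ 2 * _ := mul_nonneg (sq_nonneg _) hCS
    _ = _ := by ring

/-- For a real polynomial with all roots real and a non-root real point, the Laguerre
radicand `(n-1)²p'² - n(n-1)p p''` is nonnegative. -/
theorem laguerre_radicand_nonneg_real_roots (n : ℕ) (hn : 1 ≤ n)
    (c : ℝ) (hc : c ≠ 0) (ρ : Fin n → ℝ)
    (p : ℝ → ℝ) (hp : ∀ z, p z = c * ∏ j, (z - ρ j))
    (z : ℝ) (hz : p z ≠ 0) :
    0 ≤ ((n : ℝ) - 1) ^ 2 * (deriv p z) ^ 2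
        - (n : ℝ) * ((n : ℝ) - 1) * p z * deriv (deriv p) z :=
  laguerre_radicand_nonneg_real_roots_general n c ρ p hp z hz
end

section
/- Local cubic convergence bound for Newton-type analysis: if ρ is a simple root of p and L is Laguerre's iteration function with the appropriate branch of the square root, then L is analytic in a neighborhood of ρ and L(z) − ρ = O(|z − ρ|³) as z → ρ, provided n ≥ 2. -/
/-!
Divide out the root: `p = (z - ρ) q`, so `p' = q + (z - ρ) q'` and `p'' = 2 q' + (z - ρ) q''`.
Then `L z - ρ = (z - ρ) (p' + S - n q) / (p' + S)`. Multiplying numerator and denominator by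
the conjugate `S + (n - 1) q - (z - ρ) q'` turns the numerator into
`(z - ρ) (R - ((n - 1) q - (z - ρ) q')²) = (z - ρ)³ (n (n - 2) q'² - n (n - 1) q q'')`.
Hence `L z - ρ = (z - ρ)³ G z` with `G` continuous at `ρ`, since the two denominators equal
`2 (n - 1) p'(ρ)` and `n p'(ρ)` there. The branch `S` is `(n - 1) p'(ρ) exp(½ log(R / R(ρ)))`,
analytic because `R / R(ρ)` stays near `1`.
-/

open Polynomial Filter Topology Asymptotics

noncomputable def sqrtBranch (f : ℂ → ℂ) (x c z : ℂ) : ℂ :=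
  c * Complex.exp (Complex.log (f z / f x) / 2)

section SqrtBranch

variable {f : ℂ → ℂ} {x c : ℂ}

theorem sqrtBranch_self (hx : f x ≠ 0) : sqrtBranch f x c x = c := by
  simp [sqrtBranch, div_self hx]

theorem sqrtBranch_sq (hc : c ^ 2 = f x) (hx : f x ≠ 0) {z : ℂ} (hz : f z ≠ 0) :
    sqrtBranch f x c z ^ 2 = f z := by
  rw [sqrtBranch, mul_pow, sq (Complex.exp _), ← Complex.exp_add, add_halves,
    Complex.exp_log (div_ne_zero hz hx), hc, mul_div_cancel₀ _ hx]

theorem eventually_sqrtBranch_sq (hf : ContinuousAt f x) (hc : c ^ 2 = f x) (hx : f x ≠ 0) :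
    ∀ᶠ z in 𝓝 x, sqrtBranch f x c z ^ 2 = f z :=
  (hf.eventually_ne hx).mono fun _ hz => sqrtBranch_sq hc hx hz

theorem analyticAt_sqrtBranch (hf : AnalyticAt ℂ f x) (hx : f x ≠ 0) :
    AnalyticAt ℂ (sqrtBranch f x c) x := by
  have hlog : AnalyticAt ℂ (fun z => Complex.log (f z / f x)) x := by
    refine (analyticAt_clog ?_).comp (hf.div analyticAt_const hx)
    rw [div_self hx]
    exact Complex.one_mem_slitPlane
  exact analyticAt_const.mul (analyticAt_cexp.comp (hlog.div analyticAt_const two_ne_zero))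

end SqrtBranch

section Laguerre

variable {K : Type*} [Field K]

noncomputable def laguerreRadicand (p : K[X]) (n z : K) : K :=
  (n - 1) ^ 2 * p.derivative.eval z ^ 2
    - n * (n - 1) * p.eval z * p.derivative.derivative.eval z

noncomputable def laguerreMap (p : K[X]) (n : K) (S : K → K) (z : K) : K :=
  z - n * p.eval z / (p.derivative.eval z + S z)

theorem eval_derivative_X_sub_C_mul (ρ z : K) (q : K[X]) :
    ((X - C ρ) * q).derivative.eval z = q.eval z + (z - ρ) * q.derivative.eval z := by
  simp [derivative_mul]

theorem eval_derivative_derivative_X_sub_C_mul (ρ z : K) (q : K[X]) :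
    ((X - C ρ) * q).derivative.derivative.eval z =
      2 * q.derivative.eval z + (z - ρ) * q.derivative.derivative.eval z := by
  simp [derivative_mul]
  ring

theorem laguerre_step_identity {n u Q Q' Q'' s : K}
    (hs : s ^ 2 = (n - 1) ^ 2 * (Q + u * Q') ^ 2 - n * (n - 1) * (u * Q) * (2 * Q' + u * Q''))
    (hconj : s + ((n - 1) * Q - u * Q') ≠ 0) (hden : Q + u * Q' + s ≠ 0) :
    u - n * (u * Q) / (Q + u * Q' + s) = u ^ 3 * ((n * (n - 2) * Q' ^ 2 - n * (n - 1) * Q * Q'') /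
      ((s + ((n - 1) * Q - u * Q')) * (Q + u * Q' + s))) := by
  rw [mul_div_assoc', eq_div_iff (mul_ne_zero hconj hden)]
  field_simp
  linear_combination u * hs

theorem laguerreMap_X_sub_C_mul_sub {q : K[X]} {n ρ z : K} {S : K → K}
    (hS : S z ^ 2 = laguerreRadicand ((X - C ρ) * q) n z)
    (hconj : S z + ((n - 1) * q.eval z - (z - ρ) * q.derivative.eval z) ≠ 0)
    (hden : ((X - C ρ) * q).derivative.eval z + S z ≠ 0) :
    laguerreMap ((X - C ρ) * q) n S z - ρ = (z - ρ) ^ 3 *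
      ((n * (n - 2) * q.derivative.eval z ^ 2
          - n * (n - 1) * q.eval z * q.derivative.derivative.eval z) /
        ((S z + ((n - 1) * q.eval z - (z - ρ) * q.derivative.eval z)) *
          (((X - C ρ) * q).derivative.eval z + S z))) := by
  have hp : ((X - C ρ) * q).eval z = (z - ρ) * q.eval z := by simp
  rw [laguerreRadicand, hp, eval_derivative_X_sub_C_mul,
    eval_derivative_derivative_X_sub_C_mul] at hS
  rw [eval_derivative_X_sub_C_mul] at hden ⊢
  rw [laguerreMap, sub_right_comm, hp, eval_derivative_X_sub_C_mul]
  exact laguerre_step_identity hS hconj hden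

end Laguerre

section Complex

variable {p : ℂ[X]} {n ρ : ℂ} {S : ℂ → ℂ}

theorem analyticAt_laguerreRadicand : AnalyticAt ℂ (laguerreRadicand p n) ρ :=
  (analyticAt_const.mul ((p.derivative.differentiable.analyticAt ρ).pow 2)).sub
    ((analyticAt_const.mul (p.differentiable.analyticAt ρ)).mul
      (p.derivative.derivative.differentiable.analyticAt ρ))

theorem analyticAt_laguerreMap (hS : AnalyticAt ℂ S ρ)
    (hden : p.derivative.eval ρ + S ρ ≠ 0) :
    AnalyticAt ℂ (laguerreMap p n S) ρ :=
  analyticAt_id.sub ((analyticAt_const.mul (p.differentiable.analyticAt ρ)).div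
    ((p.derivative.differentiable.analyticAt ρ).add hS) hden)

theorem isBigO_laguerreMap_sub (hn0 : n ≠ 0) (hn1 : n ≠ 1) (hroot : p.IsRoot ρ)
    (hsimple : p.derivative.eval ρ ≠ 0) (hSc : ContinuousAt S ρ)
    (hSρ : S ρ = (n - 1) * p.derivative.eval ρ)
    (hS : ∀ᶠ z in 𝓝 ρ, S z ^ 2 = laguerreRadicand p n z) :
    (fun z => laguerreMap p n S z - ρ) =O[𝓝 ρ] fun z => (z - ρ) ^ 3 := by
  obtain ⟨q, rfl⟩ : ∃ q, p = (X - C ρ) * q :=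
    ⟨_, (mul_divByMonic_eq_iff_isRoot.mpr hroot).symm⟩
  have hqρ : q.eval ρ = ((X - C ρ) * q).derivative.eval ρ := by simp
  set conj := fun z => S z + ((n - 1) * q.eval z - (z - ρ) * q.derivative.eval z)
  set den := fun z => ((X - C ρ) * q).derivative.eval z + S z
  have hconj : conj ρ ≠ 0 := by
    have : conj ρ = 2 * (n - 1) * ((X - C ρ) * q).derivative.eval ρ := by
      simp only [conj, hSρ, hqρ]; ring
    rw [this]
    exact mul_ne_zero (mul_ne_zero two_ne_zero (sub_ne_zero.2 hn1)) hsimple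
  have hden : den ρ ≠ 0 := by
    have : den ρ = n * ((X - C ρ) * q).derivative.eval ρ := by
      simp only [den, hSρ]; ring
    rw [this]
    exact mul_ne_zero hn0 hsimple
  set G := fun z => (n * (n - 2) * q.derivative.eval z ^ 2
      - n * (n - 1) * q.eval z * q.derivative.derivative.eval z) / (conj z * den z)
  have hG : ContinuousAt G ρ := by fun_prop (disch := exact mul_ne_zero hconj hden)
  have hfactor :
      ∀ᶠ z in 𝓝 ρ, laguerreMap ((X - C ρ) * q) n S z - ρ = (z - ρ) ^ 3 * G z := by
    filter_upwards [hS, (by fun_prop : ContinuousAt conj ρ).eventually_ne hconj,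
      (by fun_prop : ContinuousAt den ρ).eventually_ne hden] with z hSz hconjz hdenz
    exact laguerreMap_X_sub_C_mul_sub hSz hconjz hdenz
  calc (fun z => laguerreMap ((X - C ρ) * q) n S z - ρ)
      _ =ᶠ[𝓝 ρ] fun z => (z - ρ) ^ 3 * G z := hfactor
      _ =O[𝓝 ρ] fun z => (z - ρ) ^ 3 * 1 := (isBigO_refl _ _).mul (hG.tendsto.isBigO_one ℂ)
      _ = fun z => (z - ρ) ^ 3 := by simp

end Complex

theorem laguerre_cubic_convergence_general (p : Polynomial ℂ) (n : ℕ) (hn : 2 ≤ n)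
    (ρ : ℂ) (hroot : p.eval ρ = 0)
    (hsimple : p.derivative.eval ρ ≠ 0) :
    ∃ (S L : ℂ → ℂ) (δ C : ℝ), 0 < δ ∧ 0 < C ∧
      S ρ = ((n : ℂ) - 1) * p.derivative.eval ρ ∧
      (∀ z ∈ Metric.ball ρ δ,
        S z ^ 2 = ((n : ℂ) - 1) ^ 2 * (p.derivative.eval z) ^ 2
          - (n : ℂ) * ((n : ℂ) - 1) * p.eval z * (p.derivative.derivative).eval z) ∧
      (∀ z ∈ Metric.ball ρ δ,
        L z = z - (n : ℂ) * p.eval z / (p.derivative.eval z + S z)) ∧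
      AnalyticAt ℂ S ρ ∧ AnalyticAt ℂ L ρ ∧
      ∀ z ∈ Metric.ball ρ δ, ‖L z - ρ‖ ≤ C * ‖z - ρ‖ ^ 3 := by
  have hn0 : (n : ℂ) ≠ 0 := by exact_mod_cast (by omega : n ≠ 0)
  have hn1 : (n : ℂ) ≠ 1 := by exact_mod_cast (by omega : n ≠ 1)
  set R := laguerreRadicand p (n : ℂ)
  have hRρ : (((n : ℂ) - 1) * p.derivative.eval ρ) ^ 2 = R ρ := by
    simp only [R, laguerreRadicand, hroot]; ring
  have hR0 : R ρ ≠ 0 := hRρ ▸ pow_ne_zero 2 (mul_ne_zero (sub_ne_zero.2 hn1) hsimple)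
  set S := sqrtBranch R ρ (((n : ℂ) - 1) * p.derivative.eval ρ)
  have hSa : AnalyticAt ℂ S ρ := analyticAt_sqrtBranch analyticAt_laguerreRadicand hR0
  have hSρ : S ρ = ((n : ℂ) - 1) * p.derivative.eval ρ := sqrtBranch_self hR0
  have hS : ∀ᶠ z in 𝓝 ρ, S z ^ 2 = R z :=
    eventually_sqrtBranch_sq analyticAt_laguerreRadicand.continuousAt hRρ hR0
  have hden : p.derivative.eval ρ + S ρ ≠ 0 := by
    rw [hSρ, ← one_add_mul, add_sub_cancel]
    exact mul_ne_zero hn0 hsimple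
  obtain ⟨C, hC, hbound⟩ :=
    (isBigO_laguerreMap_sub hn0 hn1 hroot hsimple hSa.continuousAt hSρ hS).exists_pos
  obtain ⟨δ, hδ, hball⟩ := Metric.eventually_nhds_iff.1 (hS.and hbound.bound)
  refine ⟨S, laguerreMap p n S, δ, C, hδ, hC, hSρ, fun z hz => (hball hz).1, fun z _ => rfl,
    hSa, analyticAt_laguerreMap hSa hden, fun z hz => ?_⟩
  simpa only [norm_pow] using (hball hz).2

/-- Local cubic convergence of Laguerre's method at a simple root: there is an analytic
branch `S` of the square root of the radicand near `ρ` with `S ρ = (n-1)p'(ρ)`, the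
resulting iteration function `L` is analytic near `ρ`, and `L z - ρ = O(|z - ρ|³)`. -/
theorem laguerre_cubic_convergence (p : Polynomial ℂ) (n : ℕ) (hn : 2 ≤ n)
    (hdeg : p.natDegree = n) (ρ : ℂ) (hroot : p.eval ρ = 0)
    (hsimple : p.derivative.eval ρ ≠ 0) :
    ∃ (S L : ℂ → ℂ) (δ C : ℝ), 0 < δ ∧ 0 < C ∧
      S ρ = ((n : ℂ) - 1) * p.derivative.eval ρ ∧
      (∀ z ∈ Metric.ball ρ δ,
        S z ^ 2 = ((n : ℂ) - 1) ^ 2 * (p.derivative.eval z) ^ 2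
          - (n : ℂ) * ((n : ℂ) - 1) * p.eval z * (p.derivative.derivative).eval z) ∧
      (∀ z ∈ Metric.ball ρ δ,
        L z = z - (n : ℂ) * p.eval z / (p.derivative.eval z + S z)) ∧
      AnalyticAt ℂ S ρ ∧ AnalyticAt ℂ L ρ ∧
      ∀ z ∈ Metric.ball ρ δ, ‖L z - ρ‖ ≤ C * ‖z - ρ‖ ^ 3 :=
  laguerre_cubic_convergence_general p n hn ρ hroot hsimple
end

section
/- If z is within distance d/(2n) of a simple root ρ of p (d the minimal distance to other roots) and the branch of the square root in Laguerre's formula is chosen with S(z)/p(z) close to (n−1)/(z−ρ) (i.e., the dominant branch), then the next iterate z' = L(z) satisfies |z' − ρ| < |z − ρ|; i.e., Laguerre's method is strictly contracting toward ρ on this disk. -/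
/-!
Put `w = z - ρ`, `K = n - 1`, `u = w S₁`, `s = w² S₂` and `v = w T`. The other roots are at
distance more than `(2n - 1)‖w‖` from `z`, so `u` and `s` are close to `1` and
`v² = K ((K + 1) s - u²)` is close to `K²`. The branch condition says `⟪u, v⟫ ≥ 0`, which with
`u ≈ 1` rules out `v ≈ -K`; hence `v ≈ K`, and `w - n / (S₁ + T) = w (u + v - n) / (u + v)` with
`‖u + v - n‖ ≈ ‖(u - 1) + (v - K)‖` small compared with `‖u + v‖ ≥ ‖v‖ ≈ K`.
-/

open Finset

open scoped InnerProductSpace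

theorem real_inner_nonneg_of_norm_sub_le_norm_add {F : Type*} [NormedAddCommGroup F]
    [InnerProductSpace ℝ F] {x y : F} (h : ‖x - y‖ ≤ ‖x + y‖) : 0 ≤ ⟪x, y⟫_ℝ := by
  have := pow_le_pow_left₀ (norm_nonneg _) h 2
  rw [norm_add_sq_real, norm_sub_sq_real] at this
  linarith

theorem norm_le_norm_add_of_real_inner_nonneg {F : Type*} [NormedAddCommGroup F]
    [InnerProductSpace ℝ F] {x y : F} (h : 0 ≤ ⟪x, y⟫_ℝ) : ‖y‖ ≤ ‖x + y‖ := by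
  refine le_of_sq_le_sq ?_ (norm_nonneg _)
  rw [norm_add_sq_real]
  nlinarith [sq_nonneg ‖x‖]

theorem norm_sum_pow_le {ι 𝕜 : Type*} [NormedDivisionRing 𝕜] (s : Finset ι) {t : ι → 𝕜} {c : ℝ}
    (h : ∀ j ∈ s, ‖t j‖ ≤ c) (k : ℕ) : ‖∑ j ∈ s, t j ^ k‖ ≤ #s * c ^ k := by
  calc ‖∑ j ∈ s, t j ^ k‖ ≤ ∑ _j ∈ s, c ^ k :=
        norm_sum_le_of_le s fun j hj ↦ by
          rw [norm_pow]; exact pow_le_pow_left₀ (norm_nonneg _) (h j hj) k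
    _ = #s * c ^ k := by rw [sum_const, nsmul_eq_mul]

theorem pow_mul_sum_one_div_pow_eq_one_add {ι 𝕜 : Type*} [Field 𝕜] [DecidableEq ι]
    {s : Finset ι} {i : ι} (hi : i ∈ s) {f : ι → 𝕜} (hf : f i ≠ 0) (k : ℕ) :
    f i ^ k * ∑ j ∈ s, 1 / f j ^ k = 1 + ∑ j ∈ s.erase i, (f i / f j) ^ k := by
  rw [← add_sum_erase _ _ hi, mul_add, mul_sum, mul_one_div_cancel (pow_ne_zero k hf)]
  simp only [div_pow, mul_one_div]

theorem norm_sub_div_sub_lt {𝕜 : Type*} [NormedField 𝕜] {a b z : 𝕜} {d N : ℝ}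
    (hN : 1 < N) (hsep : d ≤ ‖a - b‖) (hz : ‖z - a‖ < d / N) :
    ‖(z - a) / (z - b)‖ < 1 / (N - 1) := by
  have hfar : (N - 1) * ‖z - a‖ < ‖z - b‖ := by
    have htri : ‖a - b‖ ≤ ‖z - b‖ + ‖z - a‖ := by
      simpa [norm_sub_rev z a] using norm_sub_le (z - b) (z - a)
    rw [lt_div_iff₀ (by linarith)] at hz
    linarith
  rw [norm_div, div_lt_div_iff₀ (by nlinarith [norm_nonneg (z - a)]) (by linarith)]
  linarith

theorem norm_pow_mul_sum_one_div_pow_sub_one_le {ι : Type*} [Fintype ι] [DecidableEq ι]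
    (ρ : ι → ℂ) {i₀ : ι} {z : ℂ} (hz : z ≠ ρ i₀) {c : ℝ}
    (hc : ∀ j ≠ i₀, ‖(z - ρ i₀) / (z - ρ j)‖ ≤ c) (k : ℕ) :
    ‖(z - ρ i₀) ^ k * ∑ j, 1 / (z - ρ j) ^ k - 1‖ ≤ (Fintype.card ι - 1) * c ^ k := by
  rw [pow_mul_sum_one_div_pow_eq_one_add (f := (z - ρ ·)) (mem_univ i₀) (sub_ne_zero.2 hz),
    add_sub_cancel_left]
  refine (norm_sum_pow_le _ (fun j hj ↦ hc j (ne_of_mem_erase hj)) k).trans_eq ?_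
  rw [card_erase_of_mem (mem_univ _), card_univ, Nat.cast_pred (Fintype.card_pos_iff.2 ⟨i₀⟩)]

theorem norm_sub_div_lt_of_norm_mul_sub_lt {𝕜 : Type*} [NormedField 𝕜] {w s c : 𝕜}
    (h : ‖w * s - c‖ < ‖w * s‖) : ‖w - c / s‖ < ‖w‖ := by
  have hs : s ≠ 0 := by
    rintro rfl
    simp only [mul_zero, zero_sub, norm_neg, norm_zero] at h
    exact (norm_nonneg c).not_gt h
  rw [← mul_div_cancel_right₀ w hs, ← sub_div, norm_div, norm_div]
  exact div_lt_div_of_pos_right h (norm_pos_iff.2 hs)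

namespace Complex

theorem neg_half_norm_le_re_of_real_inner_nonneg {u v : ℂ} (hu : ‖u - 1‖ ≤ 1 / 2)
    (h : 0 ≤ ⟪u, v⟫_ℝ) : -(‖v‖ / 2) ≤ v.re := by
  have hsplit : ⟪u, v⟫_ℝ = v.re + ⟪u - 1, v⟫_ℝ := by
    rw [inner_sub_left, Complex.inner 1 v]; simp
  have := real_inner_le_norm (u - 1) v
  nlinarith [mul_le_mul_of_nonneg_right hu (norm_nonneg v)]

theorem sq_le_norm_add_ofReal_sq {v : ℂ} {K : ℝ} (hK : 0 ≤ K) (hv : -(‖v‖ / 2) ≤ v.re) :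
    3 / 4 * K ^ 2 ≤ ‖v + K‖ ^ 2 := by
  have : ⟪v, (K : ℂ)⟫_ℝ = K * v.re := by simp [Complex.inner]
  rw [norm_add_sq_real, this, Complex.norm_real, Real.norm_of_nonneg hK]
  nlinarith [sq_nonneg (‖v‖ - K / 2)]

end Complex

namespace Laguerre

theorem norm_add_sub_lt_norm_add {u v : ℂ} {K : ℝ} (hK : 0 < K) (hu : ‖u - 1‖ ≤ 1 / 2)
    (huK : ‖u - 1‖ ≤ K / 7) (hv : ‖v ^ 2 - K ^ 2‖ ≤ 3 / 7 * K ^ 2)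
    (hbranch : ‖u - v‖ ≤ ‖u + v‖) : ‖u + v - (K + 1)‖ < ‖u + v‖ := by
  have hinner := real_inner_nonneg_of_norm_sub_le_norm_add hbranch
  have hv_lower : 3 / 4 * K ≤ ‖v‖ := by
    have := norm_sub_norm_le ((K : ℂ) ^ 2) (v ^ 2)
    rw [norm_sub_rev, norm_pow, norm_pow, Complex.norm_real, Real.norm_of_nonneg hK.le] at this
    nlinarith [norm_nonneg v]
  have hvK_lower : 4 / 5 * K ≤ ‖v + K‖ := by
    have := Complex.sq_le_norm_add_ofReal_sq hK.le
      (Complex.neg_half_norm_le_re_of_real_inner_nonneg hu hinner)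
    nlinarith [norm_nonneg (v + K)]
  have hvK_upper : ‖v - K‖ ≤ 15 / 28 * K := by
    have : ‖v - K‖ * ‖v + K‖ ≤ 3 / 7 * K ^ 2 := by
      rwa [← norm_mul, show (v - K) * (v + K) = v ^ 2 - K ^ 2 by ring]
    nlinarith [norm_nonneg (v - K)]
  calc ‖u + v - (K + 1)‖ = ‖(v - K) + (u - 1)‖ := by ring_nf
    _ ≤ ‖v - K‖ + ‖u - 1‖ := norm_add_le _ _
    _ < 3 / 4 * K := by linarith
    _ ≤ ‖v‖ := hv_lower
    _ ≤ ‖u + v‖ := norm_le_norm_add_of_real_inner_nonneg hinner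

theorem norm_disc_sub_sq_le {K : ℝ} (hK : 0 ≤ K) {u s : ℂ} (hu : ‖u - 1‖ ≤ K / (2 * K + 1))
    (hs : ‖s - 1‖ ≤ K / (2 * K + 1) ^ 2) :
    ‖K * ((K + 1) * s - u ^ 2) - K ^ 2‖ ≤ 3 * K ^ 2 / (2 * K + 1) := by
  have hM : 0 < 2 * K + 1 := by linarith
  have hsplit : (K : ℂ) * ((K + 1) * s - u ^ 2) - K ^ 2
      = K * ((K + 1) * (s - 1) - 2 * (u - 1) - (u - 1) ^ 2) := by ring
  have hK1 : ‖((K : ℂ) + 1)‖ = K + 1 := by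
    rw [← Complex.ofReal_one, ← Complex.ofReal_add, Complex.norm_real,
      Real.norm_of_nonneg (by linarith)]
  calc ‖K * ((K + 1) * s - u ^ 2) - K ^ 2‖
      ≤ K * ((K + 1) * ‖s - 1‖ + 2 * ‖u - 1‖ + ‖u - 1‖ ^ 2) := by
        rw [hsplit, norm_mul, Complex.norm_real, Real.norm_of_nonneg hK]
        gcongr
        refine (norm_sub_le _ _).trans ?_
        rw [norm_pow]
        gcongr
        refine (norm_sub_le _ _).trans_eq ?_
        rw [norm_mul, norm_mul, hK1]
        norm_num
    _ ≤ K * ((K + 1) * (K / (2 * K + 1) ^ 2) + 2 * (K / (2 * K + 1))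
          + (K / (2 * K + 1)) ^ 2) := by gcongr
    _ = 3 * K ^ 2 / (2 * K + 1) := by field_simp; ring

theorem norm_normalized_step_lt {K : ℝ} (hK : 3 ≤ K) {u v s : ℂ}
    (hu : ‖u - 1‖ ≤ K / (2 * K + 1)) (hs : ‖s - 1‖ ≤ K / (2 * K + 1) ^ 2)
    (hv : v ^ 2 = K * ((K + 1) * s - u ^ 2)) (hbranch : ‖u - v‖ ≤ ‖u + v‖) :
    ‖u + v - (K + 1)‖ < ‖u + v‖ := by
  have hM : 0 < 2 * K + 1 := by linarith
  have hdisc := norm_disc_sub_sq_le (by linarith) hu hs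
  rw [← hv] at hdisc
  refine norm_add_sub_lt_norm_add (by linarith) (hu.trans ?_) (hu.trans ?_) (hdisc.trans ?_) hbranch
  · rw [div_le_iff₀ hM]; linarith
  · exact div_le_div_of_nonneg_left (by linarith) (by norm_num) (by linarith)
  · rw [div_le_iff₀ hM]; nlinarith

end Laguerre

theorem laguerre_contracts_near_simple_root_general (n : ℕ) (hn : 4 ≤ n)
    (ρ : Fin n → ℂ) (i₀ : Fin n)
    (d : ℝ) (hsep : ∀ j, j ≠ i₀ → d ≤ ‖ρ i₀ - ρ j‖)
    (z : ℂ) (hz : z ≠ ρ i₀) (hclose : ‖z - ρ i₀‖ < d / (2 * n))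
    (S₁ S₂ : ℂ) (hS₁ : S₁ = ∑ j, 1 / (z - ρ j)) (hS₂ : S₂ = ∑ j, 1 / (z - ρ j) ^ 2)
    (T : ℂ) (hT : T ^ 2 = ((n : ℂ) - 1) * ((n : ℂ) * S₂ - S₁ ^ 2))
    (hmax : ‖S₁ - T‖ ≤ ‖S₁ + T‖) :
    ‖(z - (n : ℂ) / (S₁ + T)) - ρ i₀‖ < ‖z - ρ i₀‖ := by
  obtain ⟨K, hK⟩ : ∃ K : ℝ, (n : ℝ) = K + 1 := ⟨n - 1, by ring⟩
  have hK3 : 3 ≤ K := by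
    have : (4 : ℝ) ≤ n := by exact_mod_cast hn
    linarith
  have hKn : (n : ℂ) = K + 1 := by exact_mod_cast hK
  have hcard : (Fintype.card (Fin n) : ℝ) - 1 = K := by
    rw [Fintype.card_fin, hK, add_sub_cancel_right]
  have hratio : ∀ j ≠ i₀, ‖(z - ρ i₀) / (z - ρ j)‖ ≤ 1 / (2 * K + 1) := fun j hj ↦
    (norm_sub_div_sub_lt (N := 2 * n) (by linarith) (hsep j hj) hclose).le.trans_eq
      (by rw [hK]; ring)
  have hu := norm_pow_mul_sum_one_div_pow_sub_one_le ρ hz hratio 1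
  have hs := norm_pow_mul_sum_one_div_pow_sub_one_le ρ hz hratio 2
  simp only [pow_one, ← hS₁, ← hS₂, hcard, div_pow, one_pow, mul_one_div] at hu hs
  set w := z - ρ i₀
  have hv : (w * T) ^ 2 = K * ((K + 1) * (w ^ 2 * S₂) - (w * S₁) ^ 2) := by
    rw [mul_pow, hT, hKn]; ring
  have hbranch : ‖w * S₁ - w * T‖ ≤ ‖w * S₁ + w * T‖ := by
    rw [← mul_sub, ← mul_add, norm_mul, norm_mul]; gcongr
  have key := Laguerre.norm_normalized_step_lt hK3 hu hs hv hbranch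
  rw [sub_right_comm]
  apply norm_sub_div_lt_of_norm_mul_sub_lt
  rwa [mul_add, hKn]

/-- Strict contraction of Laguerre's method near a simple root: for a monic polynomial
of degree `n ≥ 4` with simple root `ρ i₀` at distance ≥ `d` from the other roots, if
`0 < |z - ρ i₀| < d/(2n)` and the branch `T` of the square root of `(n-1)(nS₂ - S₁²)`
is chosen with `|S₁ + T|` maximal, then `|L z - ρ i₀| < |z - ρ i₀|`. -/
theorem laguerre_contracts_near_simple_root (n : ℕ) (hn : 4 ≤ n)
    (ρ : Fin n → ℂ) (i₀ : Fin n) (hsimple : ∀ j, j ≠ i₀ → ρ j ≠ ρ i₀)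
    (p : ℂ → ℂ) (hp : ∀ z, p z = ∏ j, (z - ρ j))
    (d : ℝ) (hd : 0 < d) (hsep : ∀ j, j ≠ i₀ → d ≤ ‖ρ i₀ - ρ j‖)
    (z : ℂ) (hz : z ≠ ρ i₀) (hclose : ‖z - ρ i₀‖ < d / (2 * n))
    (S₁ S₂ : ℂ) (hS₁ : S₁ = ∑ j, 1 / (z - ρ j)) (hS₂ : S₂ = ∑ j, 1 / (z - ρ j) ^ 2)
    (T : ℂ) (hT : T ^ 2 = ((n : ℂ) - 1) * ((n : ℂ) * S₂ - S₁ ^ 2))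
    (hmax : ‖S₁ - T‖ ≤ ‖S₁ + T‖) :
    ‖(z - (n : ℂ) / (S₁ + T)) - ρ i₀‖ < ‖z - ρ i₀‖ :=
  laguerre_contracts_near_simple_root_general n hn ρ i₀ d hsep z hz hclose S₁ S₂ hS₁ hS₂ T hT hmax
end
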